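/- arXiv:1612.08486 — 2 statements merged into one kernel-verified Lean document; each statement's English description precedes it below -/
import Mathlib

section
/- Let a > b > 0 and let Z⁺, Z⁻ be independent, identically distributed, strictly positive integrable random variables. Then E[min{1, (a + Z⁺)/(b + Z⁻)}] > E[min{1, (b + Z⁻)/(a + Z⁺)}]. -/
/-!
Independence and identical distribution make the pair `(Z⁺, Z⁻)` exchangeable, so the left
expectation equals `E[min{1, (b + Z⁺)/(a + Z⁻)}]`. Pointwise this is at most
`min{1, (a + Z⁺)/(b + Z⁻)}`, strictly so where `b + Z⁺ < a + Z⁻`, and that event has positive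
probability: it contains `{Z⁺ ≤ Z⁻}`, which by exchangeability is as likely as `{Z⁻ ≤ Z⁺}`,
and the two cover the sample space.
-/

open MeasureTheory ProbabilityTheory

section Exchangeable

variable {Ω : Type*} [MeasurableSpace Ω] {μ : Measure Ω}

theorem ProbabilityTheory.IndepFun.identDistrib_prodMk_swap {α : Type*} [MeasurableSpace α]
    [IsFiniteMeasure μ] {X Y : Ω → α}
    (hindep : IndepFun X Y μ) (hid : IdentDistrib X Y μ μ) :
    IdentDistrib (fun ω ↦ (X ω, Y ω)) (fun ω ↦ (Y ω, X ω)) μ μ := by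
  have hX := hid.aemeasurable_fst
  have hY := hid.aemeasurable_snd
  refine ⟨hX.prodMk hY, hY.prodMk hX, ?_⟩
  rw [(indepFun_iff_map_prod_eq_prod_map_map hX hY).1 hindep,
    (indepFun_iff_map_prod_eq_prod_map_map hY hX).1 hindep.symm, hid.map_eq]

theorem measure_setOf_le_pos_of_identDistrib_swap [IsProbabilityMeasure μ] {X Y : Ω → ℝ}
    (hswap : IdentDistrib (fun ω ↦ (X ω, Y ω)) (fun ω ↦ (Y ω, X ω)) μ μ) :
    0 < μ {ω | X ω ≤ Y ω} := by
  have hsymm : μ {ω | Y ω ≤ X ω} = μ {ω | X ω ≤ Y ω} :=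
    hswap.measure_mem_eq (s := {p : ℝ × ℝ | p.2 ≤ p.1})
      (measurableSet_le measurable_snd measurable_fst)
  have hcover : (Set.univ : Set Ω) ⊆ {ω | X ω ≤ Y ω} ∪ {ω | Y ω ≤ X ω} :=
    fun ω _ ↦ le_total (X ω) (Y ω)
  by_contra! hzero
  have hnull : μ {ω | X ω ≤ Y ω} = 0 := le_antisymm hzero zero_le
  have := measure_mono_null hcover (measure_union_null hnull (hsymm.trans hnull))
  simp at this

end Exchangeable

theorem MeasureTheory.integral_lt_integral_of_le_of_measure_setOf_lt_pos {Ω : Type*}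
    [MeasurableSpace Ω] {μ : Measure Ω} {f g : Ω → ℝ} (hf : Integrable f μ) (hg : Integrable g μ)
    (hle : ∀ ω, f ω ≤ g ω) (hlt : 0 < μ {ω | f ω < g ω}) :
    ∫ ω, f ω ∂μ < ∫ ω, g ω ∂μ := by
  rw [← sub_pos, ← integral_sub hg hf,
    integral_pos_iff_support_of_nonneg (fun ω ↦ sub_nonneg.2 (hle ω)) (hg.sub hf)]
  exact hlt.trans_le (measure_mono fun ω hω ↦ (sub_pos.2 hω).ne')

theorem MeasureTheory.integrable_min_one_of_nonneg {Ω : Type*} [MeasurableSpace Ω]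
    {μ : Measure Ω} [IsFiniteMeasure μ] {f : Ω → ℝ} (hf : AEStronglyMeasurable f μ)
    (hf_nonneg : ∀ ω, 0 ≤ f ω) :
    Integrable (fun ω ↦ min 1 (f ω)) μ := by
  refine (integrable_const (1 : ℝ)).mono' (aestronglyMeasurable_const.inf hf) ?_
  refine .of_forall fun ω ↦ ?_
  rw [Real.norm_eq_abs, abs_of_nonneg (le_min zero_le_one (hf_nonneg ω))]
  exact min_le_left _ _

section Ratios

variable {a b x y : ℝ}

theorem add_div_add_le_add_div_add (hab : b ≤ a) (hx : 0 ≤ b + x) (hy : 0 < b + y) :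
    (b + x) / (a + y) ≤ (a + x) / (b + y) := by
  rw [div_le_div_iff₀ (by linarith) hy]
  nlinarith

theorem add_div_add_lt_min_one_add_div_add (hab : b < a) (hx : 0 ≤ b + x) (hy : 0 < b + y)
    (hxy : b + x < a + y) :
    (b + x) / (a + y) < min 1 ((a + x) / (b + y)) := by
  refine lt_min ((div_lt_one (by linarith)).2 hxy) ?_
  rw [div_lt_div_iff₀ (by linarith) hy]
  nlinarith

end Ratios

theorem stmt_5_general {Ω : Type*} [MeasureSpace Ω]
    [IsProbabilityMeasure (volume : Measure Ω)]
    (a b : ℝ) (hab : b < a) (hb : 0 < b)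
    (Zp Zm : Ω → ℝ)
    (hZppos : ∀ ω, 0 < Zp ω) (hZmpos : ∀ ω, 0 < Zm ω)
    (hindep : ProbabilityTheory.IndepFun Zp Zm)
    (hid : ProbabilityTheory.IdentDistrib Zp Zm) :
    (∫ ω, min 1 ((b + Zm ω) / (a + Zp ω))) < ∫ ω, min 1 ((a + Zp ω) / (b + Zm ω)) := by
  have hswap := hindep.identDistrib_prodMk_swap hid
  have hpair : AEMeasurable (fun ω ↦ (Zp ω, Zm ω)) := hswap.aemeasurable_fst
  have ha : 0 ≤ a := (hb.trans hab).le
  have hratio (c d : ℝ) : Measurable fun p : ℝ × ℝ ↦ (c + p.1) / (d + p.2) := by fun_prop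
  have hx (c : ℝ) (hc : 0 ≤ c) (ω : Ω) : 0 ≤ c + Zp ω := by linarith [hZppos ω]
  have hy (c : ℝ) (hc : 0 ≤ c) (ω : Ω) : 0 < c + Zm ω := by linarith [hZmpos ω]
  have hint (c d : ℝ) (hc : 0 ≤ c) (hd : 0 ≤ d) :
      Integrable fun ω ↦ min 1 ((c + Zp ω) / (d + Zm ω)) :=
    integrable_min_one_of_nonneg ((hratio c d).comp_aemeasurable hpair).aestronglyMeasurable
      fun ω ↦ div_nonneg (hx c hc ω) (hy d hd ω).le
  have hexch : ∫ ω, min 1 ((b + Zm ω) / (a + Zp ω)) = ∫ ω, min 1 ((b + Zp ω) / (a + Zm ω)) :=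
    (hswap.symm.comp (measurable_const.min (hratio b a))).integral_eq
  rw [hexch]
  refine integral_lt_integral_of_le_of_measure_setOf_lt_pos (hint b a hb.le ha)
    (hint a b ha hb.le)
    (fun ω ↦ min_le_min le_rfl (add_div_add_le_add_div_add hab.le (hx b hb.le ω) (hy b hb.le ω))) ?_
  refine (measure_setOf_le_pos_of_identDistrib_swap hswap).trans_le (measure_mono fun ω hω ↦ ?_)
  have hle : Zp ω ≤ Zm ω := hω
  exact (min_le_right _ _).trans_lt
    (add_div_add_lt_min_one_add_div_add hab (hx b hb.le ω) (hy b hb.le ω) (by linarith))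

theorem stmt_5 {Ω : Type*} [MeasureSpace Ω]
    [IsProbabilityMeasure (volume : Measure Ω)]
    (a b : ℝ) (hab : b < a) (hb : 0 < b)
    (Zp Zm : Ω → ℝ) (hZpm : Measurable Zp) (hZmm : Measurable Zm)
    (hZppos : ∀ ω, 0 < Zp ω) (hZmpos : ∀ ω, 0 < Zm ω)
    (hZpint : Integrable Zp) (hZmint : Integrable Zm)
    (hindep : ProbabilityTheory.IndepFun Zp Zm)
    (hid : ProbabilityTheory.IdentDistrib Zp Zm) :
    (∫ ω, min 1 ((b + Zm ω) / (a + Zp ω))) < ∫ ω, min 1 ((a + Zp ω) / (b + Zm ω)) :=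
  stmt_5_general a b hab hb Zp Zm hZppos hZmpos hindep hid
end

section
/- Let μ_z/μ ∈ (0, ∞) and define g(s) = 2φ(s)/(2 − 2Φ(s) + μ_z/μ) for s ≥ 0, where φ, Φ are the standard normal PDF and CDF. Then there exists a unique s* ∈ (0, ∞) with g(s*) = s*. -/
noncomputable def phi (x : ℝ) : ℝ := (Real.sqrt (2 * Real.pi))⁻¹ * Real.exp (-x^2/2)

noncomputable def PhiCdf (x : ℝ) : ℝ := ∫ t in Set.Iic x, phi t

/-!
Clearing the denominator `2 - 2Φ(s) + m`, which is positive because `Φ ≤ 1` and `m > 0`, the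
fixed points of `g` are the zeros of `h(s) = s (2 - 2Φ(s) + m) - 2φ(s)` (`fixedPointGap m`).
Since `φ' = -s φ`, the terms `∓ 2 s φ(s)` cancel in `h' = 2 - 2Φ + m > 0`, so `h` is strictly
increasing. As `h(0) = -2φ(0) < 0` and `h(s) ≥ s m - 2φ(0) > 0` for large `s`, `h` has exactly
one zero, and it is positive.
-/

open Real MeasureTheory Set ProbabilityTheory

theorem hasDerivAt_setIntegral_Iic {E : Type*} [NormedAddCommGroup E] [NormedSpace ℝ E]
    [CompleteSpace E] {f : ℝ → E} (hf : Integrable f) {x : ℝ} (hx : ContinuousAt f x) :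
    HasDerivAt (fun y ↦ ∫ t in Iic y, f t) (f x) x := by
  have split : ∀ y, (∫ t in Iic 0, f t) + (∫ t in (0 : ℝ)..y, f t) = ∫ t in Iic y, f t :=
    fun y ↦ by
      rw [← intervalIntegral.integral_Iic_sub_Iic hf.integrableOn hf.integrableOn]
      abel
  have hFTC := (intervalIntegral.integral_hasDerivAt_right (a := 0) hf.intervalIntegrable
    hf.aestronglyMeasurable.stronglyMeasurableAtFilter hx).const_add (∫ t in Iic 0, f t)
  exact hFTC.congr_of_eventuallyEq (Filter.Eventually.of_forall fun y ↦ (split y).symm)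

theorem phi_eq_gaussianPDFReal : phi = gaussianPDFReal 0 1 := by
  ext x
  simp [phi, gaussianPDFReal]

theorem phi_pos (x : ℝ) : 0 < phi x := by
  unfold phi
  positivity

theorem phi_le_phi_zero (x : ℝ) : phi x ≤ phi 0 := by
  unfold phi
  gcongr _ * exp ?_
  nlinarith [sq_nonneg x]

theorem continuous_phi : Continuous phi := by
  unfold phi
  fun_prop

theorem hasDerivAt_phi (x : ℝ) : HasDerivAt phi (-x * phi x) x := by
  have hquad : HasDerivAt (fun y : ℝ ↦ -y ^ 2 / 2) (-x) x :=
    ((hasDerivAt_pow 2 x).neg.div_const 2).congr_deriv (by push_cast; ring)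
  exact (hquad.exp.const_mul (√(2 * π))⁻¹).congr_deriv (by simp only [phi]; ring)

theorem integrable_phi : Integrable phi :=
  phi_eq_gaussianPDFReal ▸ integrable_gaussianPDFReal 0 1

theorem PhiCdf_le_one (x : ℝ) : PhiCdf x ≤ 1 :=
  calc PhiCdf x ≤ ∫ t, phi t :=
        setIntegral_le_integral integrable_phi (Filter.Eventually.of_forall fun t ↦ (phi_pos t).le)
    _ = 1 := by rw [phi_eq_gaussianPDFReal, integral_gaussianPDFReal_eq_one 0 one_ne_zero]

theorem hasDerivAt_PhiCdf (x : ℝ) : HasDerivAt PhiCdf (phi x) x :=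
  hasDerivAt_setIntegral_Iic integrable_phi continuous_phi.continuousAt

noncomputable def fixedPointGap (m s : ℝ) : ℝ := s * (2 - 2 * PhiCdf s + m) - 2 * phi s

section FixedPointGap

variable {m : ℝ}

theorem hasDerivAt_fixedPointGap (s : ℝ) :
    HasDerivAt (fixedPointGap m) (2 - 2 * PhiCdf s + m) s := by
  have hprod := (hasDerivAt_id' s).mul
    (((hasDerivAt_PhiCdf s).const_mul 2).const_sub 2 |>.add_const m)
  exact (hprod.sub ((hasDerivAt_phi s).const_mul 2)).congr_deriv (by ring)

theorem continuous_fixedPointGap : Continuous (fixedPointGap m) :=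
  continuous_iff_continuousAt.2 fun s ↦ (hasDerivAt_fixedPointGap s).continuousAt

theorem strictMono_fixedPointGap (hm : 0 < m) : StrictMono (fixedPointGap m) :=
  strictMono_of_deriv_pos fun s ↦ by
    rw [(hasDerivAt_fixedPointGap s).deriv]
    linarith [PhiCdf_le_one s]

theorem fixedPointGap_zero_neg : fixedPointGap m 0 < 0 := by
  simp only [fixedPointGap, zero_mul, zero_sub, Left.neg_neg_iff]
  linarith [phi_pos 0]

theorem fixedPointGap_pos (hm : 0 < m) : 0 < fixedPointGap m (2 * phi 0 / m + 1) := by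
  set s := 2 * phi 0 / m + 1
  have hs : 0 < s := by positivity [phi_pos 0]
  have hlinear : s * m ≤ s * (2 - 2 * PhiCdf s + m) := by
    gcongr
    linarith [PhiCdf_le_one s]
  have hlarge : 2 * phi 0 < s * m := by
    simp only [s, add_mul, div_mul_cancel₀ _ hm.ne']
    linarith
  simp only [fixedPointGap]
  linarith [phi_le_phi_zero s]

theorem existsUnique_pos_fixedPointGap_eq_zero (hm : 0 < m) :
    ∃! s : ℝ, 0 < s ∧ fixedPointGap m s = 0 := by
  obtain ⟨s, hs, hzero⟩ := intermediate_value_Ioo (by positivity [phi_pos 0])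
    continuous_fixedPointGap.continuousOn ⟨fixedPointGap_zero_neg, fixedPointGap_pos hm⟩
  exact ⟨s, ⟨hs.1, hzero⟩, fun t ht ↦
    (strictMono_fixedPointGap hm).injective (ht.2.trans hzero.symm)⟩

end FixedPointGap

theorem stmt_15 (m : ℝ) (hm : 0 < m)
    (g : ℝ → ℝ) (hg : ∀ s, g s = 2 * phi s / (2 - 2 * PhiCdf s + m)) :
    ∃! sstar : ℝ, 0 < sstar ∧ g sstar = sstar := by
  have hfixed : ∀ s, g s = s ↔ fixedPointGap m s = 0 := fun s ↦ by
    have hden : 2 - 2 * PhiCdf s + m ≠ 0 := by linarith [PhiCdf_le_one s]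
    rw [hg, div_eq_iff hden, fixedPointGap, sub_eq_zero, eq_comm]
  simpa only [hfixed] using existsUnique_pos_fixedPointGap_eq_zero hm
end
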